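/- arXiv:2601.23118 — 3 statements merged into one kernel-verified Lean document; each statement's English description precedes it below -/
import Mathlib

section
/- If $h_K$ is the supporting function of a compact convex set $K \subset \mathbb{R}^n$, then $\int_{\mathbb{R}^n} e^{-h_K(t)}\,dt < \infty$ if and only if $h_K(t) > 0$ for all $t \neq 0$. -/
/-!
The supporting function `h` is subadditive, positively homogeneous and bounded by `C ‖t‖`, hence
Lipschitz. If `h > 0` off the origin, compactness of the unit sphere upgrades this to
`h t ≥ c ‖t‖` with `c > 0`, and `e^{-c ‖t‖}` is integrable. If `h v ≤ 0` for some `v ≠ 0`, then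
`h ≤ C` on the unit ball around every point `s • v`, `s ≥ 0`, of the ray through `v`, so
`e^{-h} ≥ e^{-C}` on infinitely many disjoint balls of equal volume.
-/

open MeasureTheory Set Metric Function

theorem lipschitzWith_of_subadditive_of_le_mul_norm {E : Type*} [SeminormedAddCommGroup E]
    {h : E → ℝ} (h_add : ∀ s t, h (s + t) ≤ h s + h t)
    {C : ℝ} (h_le : ∀ t, h t ≤ C * ‖t‖) : LipschitzWith C.toNNReal h := by
  refine LipschitzWith.of_dist_le' fun s t => ?_
  have hs := h_add (s - t) t
  have ht := h_add (t - s) s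
  rw [sub_add_cancel] at hs ht
  rw [Real.dist_eq, dist_eq_norm, abs_sub_le_iff]
  constructor
  · linarith [h_le (s - t)]
  · linarith [norm_sub_rev t s ▸ h_le (t - s)]

section Sublinear

variable {E : Type*} [NormedAddCommGroup E] [NormedSpace ℝ E] {h : E → ℝ}

theorem exists_pos_mul_norm_le_of_pos [FiniteDimensional ℝ E]
    (h_add : ∀ s t, h (s + t) ≤ h s + h t) (h_smul : ∀ c : ℝ, 0 ≤ c → ∀ t, h (c • t) ≤ c * h t)
    (hcont : Continuous h) (hpos : ∀ t, t ≠ 0 → 0 < h t) :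
    ∃ c > 0, ∀ t, c * ‖t‖ ≤ h t := by
  obtain ⟨c, hc, hc_le⟩ := (isCompact_sphere (0 : E) 1).exists_forall_le' hcont.continuousOn
    fun u hu => hpos u (ne_zero_of_mem_unit_sphere ⟨u, hu⟩)
  refine ⟨c, hc, fun t => ?_⟩
  rcases eq_or_ne t 0 with rfl | ht
  · -- subadditivity at `0` reads `h 0 ≤ 2 * h 0`
    simpa using h_add 0 0
  have htn : 0 < ‖t‖ := norm_pos_iff.2 ht
  have hunit : ‖t‖⁻¹ • t ∈ sphere (0 : E) 1 := by
    simp [norm_smul, htn.ne']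
  calc c * ‖t‖ ≤ h (‖t‖⁻¹ • t) * ‖t‖ := by gcongr; exact hc_le _ hunit
    _ ≤ ‖t‖⁻¹ * h t * ‖t‖ := by gcongr; exact h_smul _ (inv_nonneg.2 htn.le) t
    _ = h t := by field_simp

variable [MeasurableSpace E] [BorelSpace E] (μ : Measure E) [μ.IsAddHaarMeasure]

theorem integrable_exp_neg_mul_norm [FiniteDimensional ℝ E] {c : ℝ} (hc : 0 < c) :
    Integrable (fun x : E => Real.exp (-(c * ‖x‖))) μ := by
  rcases subsingleton_or_nontrivial E with hE | hE
  · exact Integrable.of_finite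
  rw [integrable_fun_norm_addHaar μ (f := fun y => Real.exp (-(c * y)))]
  have hd : (-1 : ℝ) < (Module.finrank ℝ E - 1 : ℕ) := by
    linarith [Nat.cast_nonneg (α := ℝ) (Module.finrank ℝ E - 1)]
  refine (integrableOn_rpow_mul_exp_neg_mul_rpow hd one_pos hc).congr_fun (fun y _ => ?_)
    measurableSet_Ioi
  simp [Real.rpow_natCast]

theorem integrable_exp_neg_of_pos [FiniteDimensional ℝ E]
    (h_add : ∀ s t, h (s + t) ≤ h s + h t) (h_smul : ∀ c : ℝ, 0 ≤ c → ∀ t, h (c • t) ≤ c * h t)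
    {C : ℝ} (h_le : ∀ t, h t ≤ C * ‖t‖) (hpos : ∀ t, t ≠ 0 → 0 < h t) :
    Integrable (fun t => Real.exp (-h t)) μ := by
  have hcont := (lipschitzWith_of_subadditive_of_le_mul_norm h_add h_le).continuous
  obtain ⟨c, hc, hc_le⟩ := exists_pos_mul_norm_le_of_pos h_add h_smul hcont hpos
  refine (integrable_exp_neg_mul_norm μ hc).mono' (by fun_prop) (.of_forall fun t => ?_)
  rw [Real.norm_of_nonneg (Real.exp_pos _).le, Real.exp_le_exp, neg_le_neg_iff]
  exact hc_le t

theorem addHaar_eq_top_of_forall_ball_smul_subset {A : Set E} {v : E} (hv : v ≠ 0) {r : ℝ}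
    (hr : 0 < r) (hA : ∀ s : ℝ, 0 ≤ s → ball (s • v) r ⊆ A) : μ A = ⊤ := by
  set w := (2 * r / ‖v‖) • v
  have hw : ‖w‖ = 2 * r := by
    rw [norm_smul, Real.norm_of_nonneg (by positivity), div_mul_cancel₀ _ (norm_ne_zero_iff.2 hv)]
  have hdisj : Pairwise (Disjoint on fun m : ℕ => ball ((m : ℝ) • w) r) := by
    intro m k hmk
    refine ball_disjoint_ball ?_
    have : (1 : ℝ) ≤ |(m : ℝ) - k| := by
      exact_mod_cast Int.one_le_abs (sub_ne_zero.2 (Nat.cast_injective.ne hmk : (m : ℤ) ≠ k))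
    rw [dist_eq_norm, ← sub_smul, norm_smul, hw, Real.norm_eq_abs]
    nlinarith
  have hsub : (⋃ m : ℕ, ball ((m : ℝ) • w) r) ⊆ A := iUnion_subset fun m => by
    simpa only [w, smul_smul] using hA _ (by positivity)
  refine top_le_iff.1 (le_trans ?_ (measure_mono hsub))
  rw [measure_iUnion hdisj fun _ => measurableSet_ball]
  simp_rw [Measure.addHaar_ball_center μ _ r]
  rw [ENNReal.tsum_const_eq_top_of_ne_zero (measure_ball_pos μ 0 hr).ne']

theorem pos_of_integrable_exp_neg
    (h_add : ∀ s t, h (s + t) ≤ h s + h t) (h_smul : ∀ c : ℝ, 0 ≤ c → ∀ t, h (c • t) ≤ c * h t)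
    {C : ℝ} (hC : 0 ≤ C) (h_le : ∀ t, h t ≤ C * ‖t‖)
    (hint : Integrable (fun t => Real.exp (-h t)) μ) : ∀ t, t ≠ 0 → 0 < h t := by
  intro v hv
  by_contra! hneg
  have hball : ∀ s : ℝ, 0 ≤ s → ball (s • v) 1 ⊆ {t | Real.exp (-C) ≤ ‖Real.exp (-h t)‖} := by
    intro s hs t ht
    have : h t ≤ C := calc
      h t = h (s • v + (t - s • v)) := by rw [add_sub_cancel]
      _ ≤ s * h v + C * ‖t - s • v‖ := (h_add _ _).trans (add_le_add (h_smul s hs v) (h_le _))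
      _ ≤ 0 + C * 1 := by
        gcongr
        · exact mul_nonpos_of_nonneg_of_nonpos hs hneg
        · exact (mem_ball_iff_norm.1 ht).le
      _ = C := by ring
    rw [mem_ofPred_eq, Real.norm_of_nonneg (Real.exp_pos _).le, Real.exp_le_exp]
    linarith
  exact (hint.measure_norm_ge_lt_top (Real.exp_pos (-C))).ne
    (addHaar_eq_top_of_forall_ball_smul_subset μ hv one_pos hball)

end Sublinear

section SupportFunction

variable {ι : Type*} [Fintype ι] {K : Set (ι → ℝ)} {h : (ι → ℝ) → ℝ}

def IsSupportFunction (K : Set (ι → ℝ)) (h : (ι → ℝ) → ℝ) : Prop :=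
  ∀ t, IsLUB ((fun a => ∑ i, a i * t i) '' K) (h t)

namespace IsSupportFunction

theorem add_le (hK : IsSupportFunction K h) (s t : ι → ℝ) : h (s + t) ≤ h s + h t :=
  (hK _).2 <| forall_mem_image.2 fun a ha => by
    simp only [Pi.add_apply, mul_add, Finset.sum_add_distrib]
    exact add_le_add ((hK s).1 (mem_image_of_mem _ ha)) ((hK t).1 (mem_image_of_mem _ ha))

theorem smul_le (hK : IsSupportFunction K h) {c : ℝ} (hc : 0 ≤ c) (t : ι → ℝ) :
    h (c • t) ≤ c * h t :=
  (hK _).2 <| forall_mem_image.2 fun a ha => by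
    simp only [Pi.smul_apply, smul_eq_mul, mul_left_comm _ c, ← Finset.mul_sum]
    exact mul_le_mul_of_nonneg_left ((hK t).1 (mem_image_of_mem _ ha)) hc

theorem exists_le_mul_norm (hK : IsSupportFunction K h) (hb : Bornology.IsBounded K) :
    ∃ C, 0 ≤ C ∧ ∀ t, h t ≤ C * ‖t‖ := by
  obtain ⟨R, hR, hRK⟩ := hb.exists_pos_norm_le
  refine ⟨Fintype.card ι * R, by positivity, fun t => (hK t).2 (forall_mem_image.2 fun a ha => ?_)⟩
  calc ∑ i, a i * t i ≤ ∑ _i : ι, R * ‖t‖ := Finset.sum_le_sum fun i _ => by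
        refine (le_abs_self _).trans ?_
        rw [abs_mul]
        gcongr
        · exact (norm_le_pi_norm a i).trans (hRK a ha)
        · exact norm_le_pi_norm t i
    _ = Fintype.card ι * R * ‖t‖ := by simp [mul_assoc]

end IsSupportFunction

end SupportFunction

theorem stmt0_general {n : ℕ} (K : Set (Fin n → ℝ)) (hcpt : IsCompact K) (h : (Fin n → ℝ) → ℝ)
    (hsupp : ∀ t : Fin n → ℝ, IsLUB ((fun a => ∑ i, a i * t i) '' K) (h t)) :
    Integrable (fun t => Real.exp (-(h t))) volume ↔
      ∀ t : Fin n → ℝ, t ≠ 0 → 0 < h t := by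
  have hK : IsSupportFunction K h := hsupp
  obtain ⟨C, hC, h_le⟩ := hK.exists_le_mul_norm hcpt.isBounded
  exact ⟨pos_of_integrable_exp_neg volume hK.add_le (fun c hc => hK.smul_le hc) hC h_le,
    integrable_exp_neg_of_pos volume hK.add_le (fun c hc => hK.smul_le hc) h_le⟩

/-- For the supporting function `h` of a nonempty compact convex set
`K ⊆ ℝⁿ`, `∫ e^{-h} dt < ∞` iff `h(t) > 0` for all `t ≠ 0`. -/
theorem stmt0 {n : ℕ} (K : Set (Fin n → ℝ)) (hcpt : IsCompact K) (hconv : Convex ℝ K)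
    (hne : K.Nonempty) (h : (Fin n → ℝ) → ℝ)
    (hsupp : ∀ t : Fin n → ℝ, IsLUB ((fun a => ∑ i, a i * t i) '' K) (h t)) :
    Integrable (fun t => Real.exp (-(h t))) volume ↔
      ∀ t : Fin n → ℝ, t ≠ 0 → 0 < h t :=
  stmt0_general K hcpt h hsupp
end

section
/- Let $u$ be a subharmonic function on $\mathbb{C}$ with Riesz measure $\mu$ of finite total mass, representable as $u(z) = \int_{\mathbb{C}} \log|z - w|\, d\mu(w) + J_2(z)$ where the support of the portion of $\mu$ inside a disk $D_R$ has mass $s_1 > 2$ and the portion outside $D_R$ has mass $s_2 < 1$. Then $\int_{|z|>2R} e^{-u(z)}\, dA(z) < \infty$, where $dA$ is Lebesgue area measure. -/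
/-!
For `|z| > 2R` every `w ∈ D_R` has `|z - w| ≥ |z|/2`, so the inner potential gives
`e^{-J₁(z)} ≤ 2^{s₁} |z|^{-s₁}`, integrable at infinity since `s₁ > 2`. For the outer potential,
Jensen's inequality for `exp` and the probability measure `μ|_{ℂ∖D_R} / s₂` gives
`e^{-J₂(z)} ≤ s₂⁻¹ ∫ (|w| / |z - w|)^{s₂} dμ(w)`, so by Tonelli it suffices to bound
`∫_{|z|>2R} |z|^{-s₁} (|w| / |z - w|)^{s₂} dz` uniformly in `|w| ≥ R`. Where `|z - w| ≥ |w|/2`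
the second factor is at most `2^{s₂}`. On the disc `|z - w| < |w|/2` the first factor is at most
`(|w|/2)^{-s₁}`, and since `s₂ < 2` scaling gives `∫_{|z-w|<ρ} |z - w|^{-s₂} dz = c ρ^{2-s₂}`,
so this part is `O(|w|^{2-s₁}) = O(R^{2-s₁})`.
-/

open MeasureTheory Set Metric

noncomputable section

/-- A subharmonic function on `ℂ`: upper semicontinuous and satisfying the
sub-mean value inequality on circles. -/
def SubMeanCirc (u : ℂ → ℝ) : Prop :=
  UpperSemicontinuous u ∧ ∀ (z : ℂ) (r : ℝ),
    u z ≤ (2 * Real.pi)⁻¹ *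
      ∫ θ in (0:ℝ)..(2 * Real.pi), u (z + (r : ℂ) * Complex.exp ((θ : ℂ) * Complex.I))

open Module

theorem ofReal_exp_neg_integral_le {α : Type*} [MeasurableSpace α] {ν : Measure α}
    [IsFiniteMeasure ν] [NeZero ν] {f : α → ℝ} {M : ℝ} (hf : AEStronglyMeasurable f ν)
    (hfM : ∀ᵐ x ∂ν, f x ≤ M) :
    ENNReal.ofReal (Real.exp (-∫ x, f x ∂ν)) ≤
      ENNReal.ofReal (ν.real univ)⁻¹ *
        ∫⁻ x, ENNReal.ofReal (Real.exp (-ν.real univ * f x)) ∂ν := by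
  set m := ν.real univ
  have hm : 0 < m := measureReal_univ_pos
  set g : α → ℝ := fun x => Real.exp (-m * f x)
  have hg : AEStronglyMeasurable g ν :=
    Real.continuous_exp.comp_aestronglyMeasurable (hf.const_mul (-m))
  have hg₀ : 0 ≤ᵐ[ν] g := .of_forall fun x => (Real.exp_pos _).le
  by_cases hfin : ∫⁻ x, ENNReal.ofReal (g x) ∂ν = ⊤
  · rw [hfin, ENNReal.mul_top (by simpa using hm)]
    exact le_top
  have hgi : Integrable g ν :=
    ⟨hg, (hasFiniteIntegral_iff_ofReal hg₀).mpr (lt_top_iff_ne_top.mpr hfin)⟩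
  -- `-f ≤ m⁻¹ g` because `t ≤ exp t`; together with `f ≤ M` this dominates `|f|`.
  have hfi : Integrable f ν := by
    refine ((integrable_const |M|).add (hgi.const_mul m⁻¹)).mono' hf ?_
    filter_upwards [hfM] with x hx
    rw [Pi.add_apply]
    have hneg : -f x ≤ m⁻¹ * g x := by
      rw [le_inv_mul_iff₀ hm]
      linarith [Real.add_one_le_exp (-m * f x)]
    have hg₀x : 0 ≤ m⁻¹ * g x := by positivity
    rw [Real.norm_eq_abs, abs_le]
    constructor <;> linarith [le_abs_self M, neg_abs_le M]
  have hJ := convexOn_exp.map_average_le Real.continuous_exp.continuousOn isClosed_univ (by simp)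
    (hfi.const_mul (-m)) hgi
  rw [average_eq, average_eq, integral_const_mul, smul_eq_mul, smul_eq_mul,
    integral_eq_lintegral_of_nonneg_ae hg₀ hg, ← mul_assoc] at hJ
  change Real.exp (m⁻¹ * -m * _) ≤ m⁻¹ * _ at hJ
  rw [mul_neg, inv_mul_cancel₀ hm.ne', neg_one_mul] at hJ
  calc ENNReal.ofReal (Real.exp (-∫ x, f x ∂ν))
      ≤ ENNReal.ofReal (m⁻¹ * (∫⁻ x, ENNReal.ofReal (g x) ∂ν).toReal) :=
        ENNReal.ofReal_le_ofReal hJ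
    _ = _ := by rw [ENNReal.ofReal_mul (by positivity), ENNReal.ofReal_toReal hfin]

theorem exp_neg_setIntegral_log_norm_sub_le {E : Type*} [NormedAddCommGroup E] [ProperSpace E]
    [MeasurableSpace E] [BorelSpace E] (μ : Measure E) [IsFiniteMeasure μ] {R : ℝ} (hR : 0 ≤ R)
    {z : E} (hz : 2 * R < ‖z‖) :
    Real.exp (-∫ w in ball 0 R, Real.log ‖z - w‖ ∂μ) ≤
      2 ^ μ.real (ball 0 R) * ‖z‖ ^ (-μ.real (ball 0 R)) := by
  set s := μ.real (ball 0 R)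
  have hz₀ : 0 < ‖z‖ / 2 := by linarith
  have hlow : ∀ w ∈ ball (0 : E) R, Real.log (‖z‖ / 2) ≤ Real.log ‖z - w‖ := fun w hw => by
    rw [mem_ball_zero_iff] at hw
    exact Real.log_le_log hz₀ (by linarith [norm_sub_norm_le z w])
  have hcont : ContinuousOn (fun w => Real.log ‖z - w‖) (closedBall (0 : E) R) := by
    refine ContinuousOn.log (by fun_prop) fun w hw => ?_
    rw [mem_closedBall_zero_iff] at hw
    exact norm_ne_zero_iff.mpr (sub_ne_zero.mpr (by rintro rfl; linarith))
  have hint : IntegrableOn (fun w => Real.log ‖z - w‖) (ball 0 R) μ :=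
    (hcont.integrableOn_compact (isCompact_closedBall 0 R)).mono_set ball_subset_closedBall
  have hJ := setIntegral_ge_of_const_le measurableSet_ball (measure_ne_top μ _) hlow hint
  rw [smul_eq_mul] at hJ
  calc Real.exp (-∫ w in ball 0 R, Real.log ‖z - w‖ ∂μ)
      ≤ Real.exp (Real.log (‖z‖ / 2) * -s) := by
        gcongr
        linarith
    _ = 2 ^ s * ‖z‖ ^ (-s) := by
        rw [← Real.rpow_def_of_pos hz₀, Real.div_rpow (norm_nonneg z) zero_le_two,
          Real.rpow_neg zero_le_two, div_inv_eq_mul, mul_comm]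

theorem ofReal_rpow_neg_mul_div_rpow_le {E : Type*} [SeminormedAddCommGroup E] {s t : ℝ}
    (hs : 0 ≤ s) (ht : 0 ≤ t) (z w : E) :
    ENNReal.ofReal (‖z‖ ^ (-s)) * ENNReal.ofReal ((‖w‖ / ‖z - w‖) ^ t) ≤
      ENNReal.ofReal (2 ^ t) * ENNReal.ofReal (‖z‖ ^ (-s)) +
        (ball w (‖w‖ / 2)).indicator
          (fun z => ENNReal.ofReal ((‖w‖ / 2) ^ (-s)) * ENNReal.ofReal ((‖w‖ / ‖z - w‖) ^ t)) z := by
  by_cases hfar : ‖w‖ ≤ 2 * ‖z - w‖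
  · refine le_add_right ?_
    rw [mul_comm]
    gcongr
    exact div_le_of_le_mul₀ (norm_nonneg _) zero_le_two hfar
  · have hz : ‖w‖ / 2 < ‖z‖ := by
      linarith [norm_sub_norm_le w z, norm_sub_rev w z]
    have hzw : z ∈ ball w (‖w‖ / 2) := by
      rw [mem_ball_iff_norm]; linarith
    refine le_add_left ?_
    rw [indicator_of_mem hzw]
    refine mul_le_mul' (ENNReal.ofReal_le_ofReal ?_) le_rfl
    exact Real.rpow_le_rpow_of_nonpos (by linarith [norm_nonneg (z - w)]) hz.le (neg_nonpos.mpr hs)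

theorem exp_neg_mul_log_norm_one_sub_div {𝕜 : Type*} [NormedField 𝕜] (t : ℝ) {z w : 𝕜}
    (hw : w ≠ 0) (hzw : z ≠ w) :
    Real.exp (-t * Real.log ‖1 - z / w‖) = (‖w‖ / ‖z - w‖) ^ t := by
  have hnorm : ‖1 - z / w‖ = ‖z - w‖ / ‖w‖ := by
    rw [one_sub_div hw, norm_div, norm_sub_rev]
  have hpos : 0 < ‖z - w‖ / ‖w‖ := by
    have := norm_pos_iff.mpr (sub_ne_zero.mpr hzw)
    have := norm_pos_iff.mpr hw
    positivity
  rw [hnorm, mul_comm, ← Real.rpow_def_of_pos hpos, Real.rpow_neg hpos.le,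
    ← Real.inv_rpow hpos.le, inv_div]

section AddHaar

variable {E : Type*} [NormedAddCommGroup E] [NormedSpace ℝ E] [FiniteDimensional ℝ E]
  [MeasurableSpace E] [BorelSpace E] (μ : Measure E) [μ.IsAddHaarMeasure]

theorem lintegral_ball_norm_rpow_neg (s : ℝ) {ρ : ℝ} (hρ : 0 < ρ) :
    ∫⁻ x in ball (0 : E) ρ, ENNReal.ofReal (‖x‖ ^ (-s)) ∂μ =
      ENNReal.ofReal (ρ ^ ((finrank ℝ E : ℝ) - s)) *
        ∫⁻ x in ball (0 : E) 1, ENNReal.ofReal (‖x‖ ^ (-s)) ∂μ := by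
  set F : E → ENNReal := (ball (0 : E) ρ).indicator fun x => ENNReal.ofReal (‖x‖ ^ (-s))
  have hF : Measurable F := Measurable.indicator (by fun_prop) measurableSet_ball
  have hscale : ∫⁻ x, F x ∂μ = ENNReal.ofReal (ρ ^ finrank ℝ E) * ∫⁻ x, F (ρ • x) ∂μ := by
    have h := lintegral_map hF (measurable_const_smul ρ) (μ := μ)
    rw [Measure.map_addHaar_smul μ hρ.ne', lintegral_smul_measure, smul_eq_mul] at h
    rw [← h, ← mul_assoc, ← ENNReal.ofReal_mul (by positivity),
      abs_of_pos (by positivity), mul_inv_cancel₀ (by positivity), ENNReal.ofReal_one, one_mul]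
  have hFsmul : (fun x => F (ρ • x)) = (ball (0 : E) 1).indicator
      fun x => ENNReal.ofReal (ρ ^ (-s)) * ENNReal.ofReal (‖x‖ ^ (-s)) := by
    ext x
    simp only [F, indicator, mem_ball_zero_iff, norm_smul, Real.norm_eq_abs, abs_of_pos hρ]
    rw [← ENNReal.ofReal_mul (by positivity), ← Real.mul_rpow hρ.le (norm_nonneg x)]
    congr 1
    exact propext (by rw [mul_lt_iff_lt_one_right hρ])
  rw [← lintegral_indicator measurableSet_ball, hscale, hFsmul,
    lintegral_indicator measurableSet_ball, lintegral_const_mul' _ _ ENNReal.ofReal_ne_top,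
    ← mul_assoc, ← ENNReal.ofReal_mul (by positivity), ← Real.rpow_natCast,
    ← Real.rpow_add hρ, sub_eq_add_neg]

theorem lintegral_ball_norm_sub_rpow_neg (s : ℝ) (w : E) {ρ : ℝ} (hρ : 0 < ρ) :
    ∫⁻ z in ball w ρ, ENNReal.ofReal (‖z - w‖ ^ (-s)) ∂μ =
      ENNReal.ofReal (ρ ^ ((finrank ℝ E : ℝ) - s)) *
        ∫⁻ x in ball (0 : E) 1, ENNReal.ofReal (‖x‖ ^ (-s)) ∂μ := by
  rw [← lintegral_ball_norm_rpow_neg μ s hρ, ← lintegral_indicator measurableSet_ball,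
    ← lintegral_indicator measurableSet_ball]
  conv_rhs => rw [← lintegral_sub_right_eq_self _ w]
  congr with z
  simp only [indicator, mem_ball_iff_norm, sub_zero]

theorem lintegral_ball_norm_rpow_neg_lt_top [Nontrivial E] {s : ℝ} (hs : s < finrank ℝ E)
    (ρ : ℝ) : ∫⁻ x in ball (0 : E) ρ, ENNReal.ofReal (‖x‖ ^ (-s)) ∂μ < ⊤ := by
  have h : IntegrableOn (fun x : E => ‖x‖ ^ (-s)) (ball 0 ρ) μ :=
    integrableOn_ball_of_norm_le_rpow finrank_pos hs (C := 1)
      (.of_forall fun x => by simp [abs_of_nonneg (Real.rpow_nonneg (norm_nonneg x) _)])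
      (measurable_norm.pow_const (-s)).aestronglyMeasurable
  exact h.lintegral_lt_top

theorem setLIntegral_norm_rpow_neg_lt_top {s r : ℝ} (hs : finrank ℝ E < s) (hr : 0 < r) :
    ∫⁻ x in {x : E | r < ‖x‖}, ENNReal.ofReal (‖x‖ ^ (-s)) ∂μ < ⊤ := by
  have hs₀ : 0 ≤ s := (Nat.cast_nonneg _).trans hs.le
  set a := (1 + r) / r
  have ha : 0 < a := by positivity
  have hle : ∀ x ∈ {x : E | r < ‖x‖}, ENNReal.ofReal (‖x‖ ^ (-s)) ≤
      ENNReal.ofReal (a ^ s) * ENNReal.ofReal ((1 + ‖x‖) ^ (-s)) := by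
    intro x (hx : r < ‖x‖)
    rw [← ENNReal.ofReal_mul (by positivity)]
    refine ENNReal.ofReal_le_ofReal ?_
    have h1 : 1 + ‖x‖ ≤ a * ‖x‖ := by
      rw [div_mul_eq_mul_div, le_div_iff₀ hr]; nlinarith
    calc ‖x‖ ^ (-s) = a ^ s * (a * ‖x‖) ^ (-s) := by
          rw [Real.mul_rpow ha.le (norm_nonneg x), ← mul_assoc, ← Real.rpow_add ha,
            add_neg_cancel, Real.rpow_zero, one_mul]
      _ ≤ a ^ s * (1 + ‖x‖) ^ (-s) :=
          mul_le_mul_of_nonneg_left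
            (Real.rpow_le_rpow_of_nonpos (by positivity) h1 (neg_nonpos.mpr hs₀)) (by positivity)
  calc _ ≤ ∫⁻ x in {x : E | r < ‖x‖},
          ENNReal.ofReal (a ^ s) * ENNReal.ofReal ((1 + ‖x‖) ^ (-s)) ∂μ :=
        setLIntegral_mono' (measurableSet_lt measurable_const measurable_norm) hle
    _ ≤ ∫⁻ x, ENNReal.ofReal (a ^ s) * ENNReal.ofReal ((1 + ‖x‖) ^ (-s)) ∂μ :=
        setLIntegral_le_lintegral _ _
    _ < ⊤ := by
        rw [lintegral_const_mul' _ _ ENNReal.ofReal_ne_top]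
        exact ENNReal.mul_lt_top ENNReal.ofReal_lt_top (finite_integral_one_add_norm hs)

theorem lintegral_ball_half_norm_rpow_neg_mul_div_rpow (s t : ℝ) {w : E} (hw : w ≠ 0) :
    ∫⁻ z in ball w (‖w‖ / 2),
        ENNReal.ofReal ((‖w‖ / 2) ^ (-s)) * ENNReal.ofReal ((‖w‖ / ‖z - w‖) ^ t) ∂μ =
      ENNReal.ofReal (2 ^ t * (‖w‖ / 2) ^ ((finrank ℝ E : ℝ) - s)) *
        ∫⁻ x in ball (0 : E) 1, ENNReal.ofReal (‖x‖ ^ (-t)) ∂μ := by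
  set ρ := ‖w‖ / 2
  have hρ : 0 < ρ := by have := norm_pos_iff.mpr hw; positivity
  have hrpow : ρ ^ (-s) * ‖w‖ ^ t * ρ ^ ((finrank ℝ E : ℝ) - t) =
      2 ^ t * ρ ^ ((finrank ℝ E : ℝ) - s) := by
    rw [show ‖w‖ = 2 * ρ by ring, Real.mul_rpow zero_le_two hρ.le, mul_left_comm, mul_assoc,
      ← Real.rpow_add hρ, ← Real.rpow_add hρ]
    ring_nf
  calc _ = ∫⁻ z in ball w ρ,
        ENNReal.ofReal (ρ ^ (-s) * ‖w‖ ^ t) * ENNReal.ofReal (‖z - w‖ ^ (-t)) ∂μ := by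
        congr with z
        rw [← ENNReal.ofReal_mul (by positivity), ← ENNReal.ofReal_mul (by positivity), mul_assoc,
          Real.div_rpow (norm_nonneg _) (norm_nonneg _), Real.rpow_neg (norm_nonneg _),
          div_eq_mul_inv (‖w‖ ^ t)]
    _ = _ := by
        rw [lintegral_const_mul' _ _ ENNReal.ofReal_ne_top,
          lintegral_ball_norm_sub_rpow_neg μ t w hρ, ← mul_assoc,
          ← ENNReal.ofReal_mul (by positivity), hrpow]

theorem exists_setLIntegral_rpow_neg_mul_div_rpow_le [Nontrivial E] {s t r R : ℝ}
    (hs : finrank ℝ E < s) (ht₀ : 0 ≤ t) (ht : t < finrank ℝ E) (hr : 0 < r) (hR : 0 < R) :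
    ∃ C < ⊤, ∀ w : E, R ≤ ‖w‖ →
      ∫⁻ z in {z : E | r < ‖z‖},
        ENNReal.ofReal (‖z‖ ^ (-s)) * ENNReal.ofReal ((‖w‖ / ‖z - w‖) ^ t) ∂μ ≤ C := by
  set d : ℝ := (finrank ℝ E : ℝ)
  have hs₀ : 0 ≤ s := (Nat.cast_nonneg _).trans hs.le
  set far := ∫⁻ z in {z : E | r < ‖z‖}, ENNReal.ofReal (‖z‖ ^ (-s)) ∂μ
  set K := ∫⁻ x in ball (0 : E) 1, ENNReal.ofReal (‖x‖ ^ (-t)) ∂μ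
  refine ⟨ENNReal.ofReal (2 ^ t) * far + ENNReal.ofReal (2 ^ t * (R / 2) ^ (d - s)) * K,
    ?_, fun w hw => ?_⟩
  · have := setLIntegral_norm_rpow_neg_lt_top μ hs hr
    have := lintegral_ball_norm_rpow_neg_lt_top μ ht 1
    finiteness
  have hw₀ : w ≠ 0 := norm_pos_iff.mp (hR.trans_le hw)
  calc _ ≤ ∫⁻ z in {z : E | r < ‖z‖}, ENNReal.ofReal (2 ^ t) * ENNReal.ofReal (‖z‖ ^ (-s)) +
          (ball w (‖w‖ / 2)).indicator (fun z => ENNReal.ofReal ((‖w‖ / 2) ^ (-s)) *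
            ENNReal.ofReal ((‖w‖ / ‖z - w‖) ^ t)) z ∂μ :=
        lintegral_mono fun z => ofReal_rpow_neg_mul_div_rpow_le hs₀ ht₀ z w
    _ ≤ ENNReal.ofReal (2 ^ t) * far + ∫⁻ z in ball w (‖w‖ / 2),
          ENNReal.ofReal ((‖w‖ / 2) ^ (-s)) * ENNReal.ofReal ((‖w‖ / ‖z - w‖) ^ t) ∂μ := by
        rw [lintegral_add_left (by fun_prop), lintegral_const_mul' _ _ ENNReal.ofReal_ne_top,
          ← lintegral_indicator measurableSet_ball]
        gcongr
        exact Measure.restrict_le_self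
    _ ≤ _ := by
        rw [lintegral_ball_half_norm_rpow_neg_mul_div_rpow μ s t hw₀]
        refine add_le_add le_rfl (mul_le_mul' (ENNReal.ofReal_le_ofReal ?_) le_rfl)
        refine mul_le_mul_of_nonneg_left ?_ (by positivity)
        exact Real.rpow_le_rpow_of_nonpos (by positivity) (by linarith) (by linarith)

end AddHaar

theorem setLIntegral_rpow_neg_mul_exp_neg_integral_log_lt_top (ν : Measure ℂ) [IsFiniteMeasure ν]
    {s r R : ℝ} (hs : 2 < s) (hν : ν.real univ < 2) (hr : 0 < r) (hR : 0 < R)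
    (hνR : ∀ᵐ w ∂ν, R ≤ ‖w‖) :
    ∫⁻ z in {z : ℂ | r < ‖z‖}, ENNReal.ofReal (‖z‖ ^ (-s)) *
      ENNReal.ofReal (Real.exp (-∫ w, Real.log ‖1 - z / w‖ ∂ν)) < ⊤ := by
  have hdim : (finrank ℝ ℂ : ℝ) = 2 := by simp [Complex.finrank_real_complex]
  rcases eq_zero_or_neZero ν with rfl | hν₀
  · simpa using setLIntegral_norm_rpow_neg_lt_top volume (hdim ▸ hs) hr
  set t := ν.real univ
  obtain ⟨C, hC, hCw⟩ := exists_setLIntegral_rpow_neg_mul_div_rpow_le (volume : Measure ℂ)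
    (hdim ▸ hs) measureReal_nonneg (hdim ▸ hν) hr hR
  have hjensen : ∀ z : ℂ, ENNReal.ofReal (Real.exp (-∫ w, Real.log ‖1 - z / w‖ ∂ν)) ≤
      ENNReal.ofReal t⁻¹ * ∫⁻ w, ENNReal.ofReal (Real.exp (-t * Real.log ‖1 - z / w‖)) ∂ν := by
    intro z
    refine ofReal_exp_neg_integral_le (M := 1 + ‖z‖ / R)
      (Real.measurable_log.comp (measurable_const.sub (measurable_const.div measurable_id)).norm
        ).aestronglyMeasurable ?_
    filter_upwards [hνR] with w hw
    calc Real.log ‖1 - z / w‖ ≤ ‖1 - z / w‖ := Real.log_le_self (norm_nonneg _)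
      _ ≤ 1 + ‖z‖ / ‖w‖ := by simpa [norm_div] using norm_sub_le (1 : ℂ) (z / w)
      _ ≤ 1 + ‖z‖ / R := by gcongr
  have hinner : ∀ᵐ w ∂ν, ∫⁻ z in {z : ℂ | r < ‖z‖}, ENNReal.ofReal (‖z‖ ^ (-s)) *
      ENNReal.ofReal (Real.exp (-t * Real.log ‖1 - z / w‖)) ≤ C := by
    filter_upwards [hνR] with w hw
    have hw₀ : w ≠ 0 := norm_pos_iff.mp (hR.trans_le hw)
    refine le_of_eq_of_le (lintegral_congr_ae (ae_restrict_of_ae ?_)) (hCw w hw)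
    filter_upwards [compl_mem_ae_iff.mpr (measure_singleton w)] with z hz
    rw [exp_neg_mul_log_norm_one_sub_div t hw₀ (mem_compl_singleton_iff.mp hz)]
  calc _ ≤ ∫⁻ z in {z : ℂ | r < ‖z‖}, ENNReal.ofReal (‖z‖ ^ (-s)) * (ENNReal.ofReal t⁻¹ *
          ∫⁻ w, ENNReal.ofReal (Real.exp (-t * Real.log ‖1 - z / w‖)) ∂ν) := by
        gcongr with z
        exact hjensen z
    _ = ENNReal.ofReal t⁻¹ * ∫⁻ w, (∫⁻ z in {z : ℂ | r < ‖z‖}, ENNReal.ofReal (‖z‖ ^ (-s)) *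
          ENNReal.ofReal (Real.exp (-t * Real.log ‖1 - z / w‖))) ∂ν := by
        rw [← lintegral_lintegral_swap (by fun_prop),
          ← lintegral_const_mul' _ _ ENNReal.ofReal_ne_top]
        refine lintegral_congr fun z => ?_
        rw [lintegral_const_mul' _ _ ENNReal.ofReal_ne_top, mul_left_comm]
    _ ≤ ENNReal.ofReal t⁻¹ * ∫⁻ _, C ∂ν := mul_le_mul' le_rfl (lintegral_mono_ae hinner)
    _ < ⊤ := by
        rw [lintegral_const]
        exact ENNReal.mul_lt_top ENNReal.ofReal_lt_top (ENNReal.mul_lt_top hC (measure_lt_top _ _))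

theorem stmt1_general (u : ℂ → ℝ) (μ : Measure ℂ) [IsFiniteMeasure μ]
    (R : ℝ) (hR : 0 < R)
    (hs1 : 2 < (μ (ball (0:ℂ) R)).toReal)
    (hs2 : (μ (ball (0:ℂ) R)ᶜ).toReal < 1)
    (hrep : ∀ z : ℂ, u z = (∫ w in ball (0:ℂ) R, Real.log ‖z - w‖ ∂μ) +
      ∫ w in (ball (0:ℂ) R)ᶜ, Real.log ‖1 - z / w‖ ∂μ) :
    IntegrableOn (fun z => Real.exp (-(u z))) {z : ℂ | 2 * R < ‖z‖} volume := by
  set B := ball (0 : ℂ) R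
  have hu : StronglyMeasurable u := by
    rw [funext hrep]
    exact (StronglyMeasurable.integral_prod_right'
      (f := fun p : ℂ × ℂ => Real.log ‖p.1 - p.2‖) (by fun_prop)).add
      (StronglyMeasurable.integral_prod_right'
        (f := fun p : ℂ × ℂ => Real.log ‖1 - p.1 / p.2‖) (by fun_prop))
  have hpoint : ∀ z ∈ {z : ℂ | 2 * R < ‖z‖}, ENNReal.ofReal (Real.exp (-u z)) ≤
      ENNReal.ofReal (2 ^ μ.real B) * (ENNReal.ofReal (‖z‖ ^ (-μ.real B)) *
        ENNReal.ofReal (Real.exp (-∫ w in Bᶜ, Real.log ‖1 - z / w‖ ∂μ))) := by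
    intro z hz
    rw [hrep z, neg_add, Real.exp_add, ← mul_assoc, ← ENNReal.ofReal_mul (by positivity),
      ← ENNReal.ofReal_mul (by positivity)]
    gcongr
    exact exp_neg_setIntegral_log_norm_sub_le μ hR.le hz
  have houter := setLIntegral_rpow_neg_mul_exp_neg_integral_log_lt_top (μ.restrict Bᶜ)
    (s := μ.real B) (r := 2 * R) hs1
    (by rw [measureReal_restrict_apply_univ]; exact hs2.trans one_lt_two) (by positivity) hR
    ((ae_restrict_mem measurableSet_ball.compl).mono fun w hw => by simpa [B] using hw)
  refine ⟨(Real.continuous_exp.comp_stronglyMeasurable hu.neg).aestronglyMeasurable,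
    (hasFiniteIntegral_iff_ofReal (.of_forall fun z => (Real.exp_pos _).le)).mpr ?_⟩
  calc _ ≤ _ := setLIntegral_mono' (measurableSet_lt measurable_const measurable_norm) hpoint
    _ < ⊤ := by
        rw [lintegral_const_mul' _ _ ENNReal.ofReal_ne_top]
        exact ENNReal.mul_lt_top ENNReal.ofReal_lt_top houter

/-- if `u` is subharmonic with finite-mass Riesz measure `μ`,
`u(z) = ∫_{D_R} log|z-w| dμ(w) + ∫_{ℂ∖D_R} log|1-z/w| dμ(w)`, with
`μ(D_R) = s₁ > 2` and `μ(ℂ∖D_R) = s₂ < 1`, then `∫_{|z|>2R} e^{-u} dA < ∞`. -/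
theorem stmt1 (u : ℂ → ℝ) (hsub : SubMeanCirc u) (μ : Measure ℂ) [IsFiniteMeasure μ]
    (R : ℝ) (hR : 0 < R)
    (hs1 : 2 < (μ (ball (0:ℂ) R)).toReal)
    (hs2 : (μ (ball (0:ℂ) R)ᶜ).toReal < 1)
    (hrep : ∀ z : ℂ, u z = (∫ w in ball (0:ℂ) R, Real.log ‖z - w‖ ∂μ) +
      ∫ w in (ball (0:ℂ) R)ᶜ, Real.log ‖1 - z / w‖ ∂μ) :
    IntegrableOn (fun z => Real.exp (-(u z))) {z : ℂ | 2 * R < ‖z‖} volume :=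
  stmt1_general u μ R hR hs1 hs2 hrep
end
end

section
/- Let $P(z_1, z_2) = z_1^2 z_2 (z_2^2 - 1)$ on $\mathbb{C}^2$. Then the set $\{z \in \mathbb{C}^2 : |P(z)| \le 1\}$ has finite Lebesgue volume, and for every $c > 1/2$, $\int_{\mathbb{C}^2} \max\{|P(z)|, 1\}^{-2c}\, dV < \infty$, while for $c \le 1/2$ the integral diverges; hence $\hat c_\infty(P) = 1/2$. -/
/-!
For fixed `z₂` with `w = z₂ (z₂² - 1) ≠ 0`, the substitution `z₁ = u / √‖w‖` turns the inner
integral into `‖w‖⁻¹ ∫ max (‖u‖², 1) ^ (-2c) du`, which is finite exactly when `4c > 2 = dim_ℝ ℂ`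
(polar coordinates). The weight `‖w‖⁻¹` is integrable in `z₂`: it has simple poles at `0, ±1` and
decays like `‖z₂‖⁻³`, so near each root it is dominated by `‖v‖⁻¹ (1 + ‖v‖)⁻²`, `v = z₂ - root`,
whose radial profile `(1 + r)⁻²` is integrable. Fubini then gives integrability iff `c > 1/2`,
and `{‖P‖ ≤ 1}` has finite volume because the integrand is `1` there.
-/

open MeasureTheory Set Module

theorem integrable_max_norm_one_rpow_neg_iff {E : Type*} [NormedAddCommGroup E]
    [NormedSpace ℝ E] [FiniteDimensional ℝ E] [MeasurableSpace E] [BorelSpace E] [Nontrivial E]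
    (μ : Measure E) [μ.IsAddHaarMeasure] {s : ℝ} :
    Integrable (fun x : E => max ‖x‖ 1 ^ (-s)) μ ↔ (finrank ℝ E : ℝ) < s := by
  have hd : 1 ≤ finrank ℝ E := finrank_pos
  have htail : EqOn (fun y : ℝ => y ^ (finrank ℝ E - 1) • max y 1 ^ (-s))
      (fun y => y ^ ((finrank ℝ E : ℝ) - 1 - s)) (Ioi 1) := by
    intro y (hy : 1 < y)
    dsimp only
    rw [smul_eq_mul, max_eq_left hy.le, sub_eq_add_neg _ s,
      Real.rpow_add (by linarith), ← Nat.cast_pred hd, Real.rpow_natCast]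
  have hcont : Continuous fun y : ℝ => y ^ (finrank ℝ E - 1) • max y 1 ^ (-s) :=
    (continuous_pow _).smul ((continuous_id.max continuous_const).rpow_const
      fun y => Or.inl (by positivity))
  rw [integrable_fun_norm_addHaar μ (f := fun y => max y 1 ^ (-s)),
    ← Ioc_union_Ioi_eq_Ioi zero_le_one, integrableOn_union,
    integrableOn_congr_fun htail measurableSet_Ioi, integrableOn_Ioi_rpow_iff one_pos]
  simp only [hcont.integrableOn_Ioc, true_and]
  constructor <;> intro h <;> linarith

theorem mul_norm_sq_eq_norm_sqrt_smul_sq {t : ℝ} (ht : 0 ≤ t) (x : ℂ) :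
    t * ‖x‖ ^ 2 = ‖√t • x‖ ^ 2 := by
  rw [norm_smul, mul_pow, Real.norm_of_nonneg (Real.sqrt_nonneg t), Real.sq_sqrt ht]

theorem integrable_comp_mul_norm_sq_iff {F : Type*} [NormedAddCommGroup F] (f : ℝ → F) {t : ℝ}
    (ht : 0 < t) :
    Integrable (fun x : ℂ => f (t * ‖x‖ ^ 2)) ↔ Integrable (fun x : ℂ => f (‖x‖ ^ 2)) := by
  simp_rw [mul_norm_sq_eq_norm_sqrt_smul_sq ht.le]
  exact integrable_comp_smul_iff volume (fun x : ℂ => f (‖x‖ ^ 2)) (Real.sqrt_pos.2 ht).ne'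

theorem integral_comp_mul_norm_sq {F : Type*} [NormedAddCommGroup F] [NormedSpace ℝ F]
    (f : ℝ → F) {t : ℝ} (ht : 0 < t) :
    ∫ x : ℂ, f (t * ‖x‖ ^ 2) = t⁻¹ • ∫ x : ℂ, f (‖x‖ ^ 2) := by
  simp_rw [mul_norm_sq_eq_norm_sqrt_smul_sq ht.le]
  rw [Measure.integral_comp_smul volume (fun x : ℂ => f (‖x‖ ^ 2)), Complex.finrank_real_complex,
    Real.sq_sqrt ht.le, abs_of_pos (inv_pos.2 ht)]

theorem integrable_max_norm_sq_rpow_iff {c : ℝ} :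
    Integrable (fun x : ℂ => max (‖x‖ ^ 2) 1 ^ (-(2 * c))) ↔ 1 / 2 < c := by
  have hsq : ∀ x : ℂ, max (‖x‖ ^ 2) 1 ^ (-(2 * c)) = max ‖x‖ 1 ^ (-(4 * c)) := by
    intro x
    have hmax : max (‖x‖ ^ 2) 1 = max ‖x‖ 1 ^ 2 := by
      rcases le_total ‖x‖ 1 with h | h
      · rw [max_eq_right h, max_eq_right (pow_le_one₀ (norm_nonneg x) h), one_pow]
      · rw [max_eq_left h, max_eq_left (one_le_pow₀ h)]
    rw [hmax, ← Real.rpow_natCast_mul (by positivity)]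
    ring_nf
  simp_rw [hsq]
  rw [integrable_max_norm_one_rpow_neg_iff, Complex.finrank_real_complex]
  constructor <;> intro h <;> push_cast at * <;> linarith

theorem integrable_max_norm_sq_mul_rpow_iff {w : ℂ} (hw : w ≠ 0) {c : ℝ} :
    Integrable (fun x : ℂ => max ‖x ^ 2 * w‖ 1 ^ (-(2 * c))) ↔ 1 / 2 < c := by
  simp_rw [norm_mul, norm_pow, mul_comm _ ‖w‖]
  rw [integrable_comp_mul_norm_sq_iff (fun r => max r 1 ^ (-(2 * c))) (norm_pos_iff.2 hw),
    integrable_max_norm_sq_rpow_iff]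

theorem integral_max_norm_sq_mul_rpow {w : ℂ} (hw : w ≠ 0) (c : ℝ) :
    ∫ x : ℂ, max ‖x ^ 2 * w‖ 1 ^ (-(2 * c)) =
      ‖w‖⁻¹ * ∫ x : ℂ, max (‖x‖ ^ 2) 1 ^ (-(2 * c)) := by
  simp_rw [norm_mul, norm_pow, mul_comm _ ‖w‖]
  exact integral_comp_mul_norm_sq (fun r => max r 1 ^ (-(2 * c))) (norm_pos_iff.2 hw)

theorem integrable_max_norm_sq_mul_rpow_prod_iff {q : ℂ → ℂ} (hq_meas : Measurable q)
    (hq_ne : ∀ᵐ y, q y ≠ 0) (hq_inv : Integrable fun y => ‖q y‖⁻¹) {c : ℝ} :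
    Integrable (fun z : ℂ × ℂ => max ‖z.1 ^ 2 * q z.2‖ 1 ^ (-(2 * c))) ↔ 1 / 2 < c := by
  have hmeas : AEStronglyMeasurable (fun z : ℂ × ℂ => max ‖z.1 ^ 2 * q z.2‖ 1 ^ (-(2 * c)))
      (volume.prod volume) := by
    apply Measurable.aestronglyMeasurable
    fun_prop
  rw [Measure.volume_eq_prod, integrable_prod_iff' hmeas]
  constructor
  · rintro ⟨hfiber, -⟩
    obtain ⟨y, hy, hqy⟩ := (hfiber.and hq_ne).exists
    exact (integrable_max_norm_sq_mul_rpow_iff hqy).1 hy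
  · intro hc
    refine ⟨hq_ne.mono fun y hy => (integrable_max_norm_sq_mul_rpow_iff hy).2 hc, ?_⟩
    refine (hq_inv.mul_const (∫ x : ℂ, max (‖x‖ ^ 2) 1 ^ (-(2 * c)))).congr
      (hq_ne.mono fun y hy => ?_)
    simp_rw [Real.norm_of_nonneg (Real.rpow_nonneg (zero_le_one.trans (le_max_right _ _)) _)]
    exact (integral_max_norm_sq_mul_rpow hy c).symm

theorem integrable_inv_norm_mul_one_add_norm_sq :
    Integrable fun v : ℂ => (‖v‖ * (1 + ‖v‖) ^ 2)⁻¹ := by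
  rw [integrable_fun_norm_addHaar volume (f := fun r => (r * (1 + r) ^ 2)⁻¹),
    Complex.finrank_real_complex]
  refine integrable_inv_one_add_sq.integrableOn.mono' (by fun_prop) ?_
  filter_upwards [ae_restrict_mem measurableSet_Ioi] with r (hr : 0 < r)
  rw [pow_one, smul_eq_mul, mul_inv, ← mul_assoc, mul_inv_cancel₀ hr.ne', one_mul,
    Real.norm_of_nonneg (by positivity)]
  exact inv_anti₀ (by positivity) (by nlinarith)

theorem inv_mul_mul_le_of_le {a b c : ℝ} (ha : 0 ≤ a) (hab : a ≤ b) (hac : a ≤ c)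
    (hb : 1 ≤ a + b) (hc : 1 ≤ a + c) : (a * b * c)⁻¹ ≤ 16 * (a * (1 + a) ^ 2)⁻¹ := by
  rcases ha.eq_or_lt with rfl | ha
  · simp
  have hb' : (1 + a) / 4 ≤ b := by linarith
  have hc' : (1 + a) / 4 ≤ c := by linarith
  calc (a * b * c)⁻¹ ≤ (a * ((1 + a) / 4) * ((1 + a) / 4))⁻¹ :=
        inv_anti₀ (by positivity) (by gcongr; exact mul_nonneg ha.le (by linarith))
    _ = 16 * (a * (1 + a) ^ 2)⁻¹ := by field_simp; ring

theorem inv_mul_mul_le_sum {a b c : ℝ} (ha : 0 ≤ a) (hb : 0 ≤ b) (hc : 0 ≤ c)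
    (hab : 1 ≤ a + b) (hac : 1 ≤ a + c) (hbc : 1 ≤ b + c) :
    (a * b * c)⁻¹ ≤
      16 * ((a * (1 + a) ^ 2)⁻¹ + (b * (1 + b) ^ 2)⁻¹ + (c * (1 + c) ^ 2)⁻¹) := by
  have hA : 0 ≤ (a * (1 + a) ^ 2)⁻¹ := by positivity
  have hB : 0 ≤ (b * (1 + b) ^ 2)⁻¹ := by positivity
  have hC : 0 ≤ (c * (1 + c) ^ 2)⁻¹ := by positivity
  obtain ⟨h₁, h₂⟩ | ⟨h₁, h₂⟩ | ⟨h₁, h₂⟩ :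
      (a ≤ b ∧ a ≤ c) ∨ (b ≤ a ∧ b ≤ c) ∨ (c ≤ a ∧ c ≤ b) := by
    grind
  · linarith [inv_mul_mul_le_of_le ha h₁ h₂ hab hac]
  · rw [show a * b * c = b * a * c by ring]
    linarith [inv_mul_mul_le_of_le hb h₁ h₂ (by linarith) hbc]
  · rw [show a * b * c = c * a * b by ring]
    linarith [inv_mul_mul_le_of_le hc h₁ h₂ (by linarith) (by linarith)]

theorem integrable_inv_norm_mul_sq_sub_one :
    Integrable fun y : ℂ => ‖y * (y ^ 2 - 1)‖⁻¹ := by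
  have hg := integrable_inv_norm_mul_one_add_norm_sq
  refine (((hg.add (hg.comp_sub_right 1)).add (hg.comp_add_right 1)).const_mul 16).mono'
    (by fun_prop) (.of_forall fun y => ?_)
  have h₁ : 1 ≤ ‖y‖ + ‖y - 1‖ := by simpa using norm_sub_le y (y - 1)
  have h₂ : 1 ≤ ‖y‖ + ‖y + 1‖ := by simpa [add_comm] using norm_sub_le (y + 1) y
  have h₃ : 1 ≤ ‖y - 1‖ + ‖y + 1‖ := by
    linarith [norm_sub_le (y + 1) (y - 1), show ‖y + 1 - (y - 1)‖ = 2 by norm_num]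
  rw [norm_inv, norm_norm, show y * (y ^ 2 - 1) = y * (y - 1) * (y + 1) by ring, norm_mul,
    norm_mul]
  exact inv_mul_mul_le_sum (norm_nonneg _) (norm_nonneg _) (norm_nonneg _) h₁ h₂ h₃

theorem ae_mul_sq_sub_one_ne_zero : ∀ᵐ y : ℂ, y * (y ^ 2 - 1) ≠ 0 := by
  filter_upwards [Measure.ae_ne volume 0, Measure.ae_ne volume 1, Measure.ae_ne volume (-1)]
    with y h₀ h₁ h₂
  rw [show y * (y ^ 2 - 1) = y * (y - 1) * (y + 1) by ring]
  exact mul_ne_zero (mul_ne_zero h₀ (sub_ne_zero.2 h₁)) fun h => h₂ (eq_neg_of_add_eq_zero_left h)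

theorem measure_norm_le_one_lt_top {α E : Type*} [MeasurableSpace α] [NormedAddCommGroup E]
    {μ : Measure α} {g : α → E} {s : ℝ} (h : Integrable (fun z => max ‖g z‖ 1 ^ (-s)) μ) :
    μ {z | ‖g z‖ ≤ 1} < ⊤ :=
  (h.measure_norm_ge_lt_top one_pos).trans_le' <| measure_mono fun z (hz : ‖g z‖ ≤ 1) => by
    simp [max_eq_right hz]

/-- for `P(z₁,z₂) = z₁²z₂(z₂²-1)` on `ℂ²`: `{|P| ≤ 1}` has finite volume,
`∫ max(|P|,1)^{-2c} dV < ∞` for `c > 1/2` and diverges for `c ≤ 1/2`; hence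
`ĉ∞(P) = 1/2`. -/
theorem stmt5 (P : ℂ × ℂ → ℂ) (hP : ∀ z : ℂ × ℂ, P z = z.1 ^ 2 * z.2 * (z.2 ^ 2 - 1)) :
    volume {z : ℂ × ℂ | ‖P z‖ ≤ 1} < ⊤ ∧
    (∀ c : ℝ, 1 / 2 < c →
      Integrable (fun z : ℂ × ℂ => (max ‖P z‖ 1) ^ (-(2 * c))) volume) ∧
    (∀ c : ℝ, c ≤ 1 / 2 →
      ¬ Integrable (fun z : ℂ × ℂ => (max ‖P z‖ 1) ^ (-(2 * c))) volume) ∧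
    sInf {c : ℝ | 0 < c ∧
      Integrable (fun z : ℂ × ℂ => (max ‖P z‖ 1) ^ (-(2 * c))) volume} = 1 / 2 := by
  have key (c : ℝ) :
      Integrable (fun z : ℂ × ℂ => (max ‖P z‖ 1) ^ (-(2 * c))) volume ↔ 1 / 2 < c := by
    simp_rw [hP, mul_assoc]
    exact integrable_max_norm_sq_mul_rpow_prod_iff (by fun_prop) ae_mul_sq_sub_one_ne_zero
      integrable_inv_norm_mul_sq_sub_one
  refine ⟨measure_norm_le_one_lt_top ((key 1).2 (by norm_num)), fun c => (key c).2,
    fun c hc h => ((key c).1 h).not_ge hc, ?_⟩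
  have hset : {c : ℝ | 0 < c ∧
      Integrable (fun z : ℂ × ℂ => (max ‖P z‖ 1) ^ (-(2 * c))) volume} = Ioi (1 / 2) := by
    ext c
    simp only [mem_ofPred_eq, key, mem_Ioi, and_iff_right_iff_imp]
    intro hc
    linarith
  rw [hset, csInf_Ioi]
end
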